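/- Let E be a real Banach space, K ≥ 0, and v : E → E a K-Lipschitz map. Let T : E → E be a linear isometric equivalence of E that commutes with v, i.e. v (T x) = T (v x) for all x ∈ E. Suppose g : ℝ → E is differentiable on the interval [0, τ) and satisfies the ODE g'(t) = v (g t) for all t ∈ [0, τ), and that the initial value is T-invariant: T (g 0) = g 0. Then the whole trajectory is T-invariant: T (g t) = g t for every t ∈ [0, τ). (This is the abstract uniqueness argument behind the paper's Lemma on Preservation of Isometries: the pulled-back solution t ↦ T (g t) solves the same ODE with the same initial data, hence coincides with g by uniqueness of solutions to Lipschitz ODEs.) -/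

import Mathlib

open Set

theorem ContinuousLinearMap.hasDerivAt_comp_of_semiconj
    {𝕜 E F : Type*} [NontriviallyNormedField 𝕜]
    [NormedAddCommGroup E] [NormedSpace 𝕜 E] [NormedAddCommGroup F] [NormedSpace 𝕜 F]
    (L : E →L[𝕜] F) {v : E → E} {w : F → F} (hL : Function.Semiconj L v w)
    {g : 𝕜 → E} {t : 𝕜} (hg : HasDerivAt g (v (g t)) t) :
    HasDerivAt (L ∘ g) (w (L (g t))) t := by
  simpa only [hL (g t)] using L.hasFDerivAt.comp_hasDerivAt t hg

theorem LipschitzWith.eqOn_Ico_of_hasDerivAt {E : Type*} [NormedAddCommGroup E]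
    [NormedSpace ℝ E] {K : NNReal} {v : E → E} (hv : LipschitzWith K v) {f g : ℝ → E}
    {a b : ℝ} (hf : ∀ t ∈ Ico a b, HasDerivAt f (v (f t)) t)
    (hg : ∀ t ∈ Ico a b, HasDerivAt g (v (g t)) t) (ha : f a = g a) :
    EqOn f g (Ico a b) := by
  intro t ⟨hat, htb⟩
  have hsub : Icc a t ⊆ Ico a b := Icc_subset_Ico_right htb
  refine ODE_solution_unique (v := fun _ ↦ v) (fun _ ↦ hv)
    (HasDerivAt.continuousOn fun s hs ↦ hf s (hsub hs))
    (fun s hs ↦ (hf s (hsub (Ico_subset_Icc_self hs))).hasDerivWithinAt)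
    (HasDerivAt.continuousOn fun s hs ↦ hg s (hsub hs))
    (fun s hs ↦ (hg s (hsub (Ico_subset_Icc_self hs))).hasDerivWithinAt) ha ⟨hat, le_rfl⟩

theorem symmetry_preserved_along_lipschitz_ODE_general
    {E : Type*} [NormedAddCommGroup E] [NormedSpace ℝ E]
    (K : NNReal) (v : E → E) (hv : LipschitzWith K v)
    (T : E ≃ₗᵢ[ℝ] E) (hcomm : ∀ x : E, v (T x) = T (v x))
    (τ : ℝ) (g : ℝ → E)
    (hg : ∀ t ∈ Set.Ico (0 : ℝ) τ, HasDerivAt g (v (g t)) t)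
    (h0 : T (g 0) = g 0) :
    ∀ t ∈ Set.Ico (0 : ℝ) τ, T (g t) = g t := by
  have hTg : ∀ t ∈ Ico 0 τ, HasDerivAt (T ∘ g) (v ((T ∘ g) t)) t := fun t ht ↦
    (T.toContinuousLinearEquiv : E →L[ℝ] E).hasDerivAt_comp_of_semiconj
      (fun x ↦ (hcomm x).symm) (hg t ht)
  exact hv.eqOn_Ico_of_hasDerivAt hTg hg h0

/-- abstract preservation of a single symmetry along a Lipschitz ODE.
Let `E` be a real Banach space, `K ≥ 0`, and `v : E → E` a `K`-Lipschitz map.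
Let `T : E ≃ₗᵢ[ℝ] E` be a linear isometric equivalence commuting with `v`.
If `g : ℝ → E` is differentiable on `[0, τ)` with `g' t = v (g t)` there, and
`T (g 0) = g 0`, then `T (g t) = g t` for every `t ∈ [0, τ)`. -/
theorem symmetry_preserved_along_lipschitz_ODE
    {E : Type*} [NormedAddCommGroup E] [NormedSpace ℝ E] [CompleteSpace E]
    (K : NNReal) (v : E → E) (hv : LipschitzWith K v)
    (T : E ≃ₗᵢ[ℝ] E) (hcomm : ∀ x : E, v (T x) = T (v x))
    (τ : ℝ) (g : ℝ → E)
    (hg : ∀ t ∈ Set.Ico (0 : ℝ) τ, HasDerivAt g (v (g t)) t)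
    (h0 : T (g 0) = g 0) :
    ∀ t ∈ Set.Ico (0 : ℝ) τ, T (g t) = g t :=
  symmetry_preserved_along_lipschitz_ODE_general K v hv T hcomm τ g hg h0
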